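/- For every integer w ≥ 2, the interval [1/5, w/(2w+2)] is contained in the union over integers ℓ with 2 ≤ ℓ ≤ w of the intervals [(ℓ-1)/(2ℓ+1), ℓ/(2ℓ+2)]. -/
import Mathlib


/-- For every integer `w ≥ 2`, the interval `[1/5, w/(2w+2)]` is covered by the
intervals `[(ℓ-1)/(2ℓ+1), ℓ/(2ℓ+2)]` for `2 ≤ ℓ ≤ w`. -/
theorem stmt_2 (w : ℕ) (hw : 2 ≤ w) :
    Set.Icc (1/5 : ℝ) ((w : ℝ) / (2 * w + 2)) ⊆
      ⋃ ℓ ∈ Finset.Icc 2 w,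
        Set.Icc (((ℓ : ℝ) - 1) / (2 * ℓ + 1)) ((ℓ : ℝ) / (2 * ℓ + 2)) := by
  intro x hx
  obtain ⟨hx1, hx2⟩ := hx
  have hw' : (2:ℝ) ≤ (w:ℝ) := by exact_mod_cast hw
  have hd : (0:ℝ) < 2*w+2 := by linarith
  have hx2' : x * (2*(w:ℝ)+2) ≤ w := (le_div_iff₀ hd).mp hx2
  have hx3 : x < 1/2 := by nlinarith
  have hpos : (0:ℝ) < 1 - 2*x := by linarith
  set t : ℝ := 2*x/(1-2*x) with ht
  have ht0 : 0 ≤ t := div_nonneg (by linarith) hpos.le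
  have ht' : t * (1 - 2*x) = 2*x := div_mul_cancel₀ _ (ne_of_gt hpos)
  have htw : t ≤ (w:ℝ) := by
    rw [ht, div_le_iff₀ hpos]; nlinarith
  set ℓ : ℕ := max 2 ⌈t⌉₊ with hℓdef
  have hℓ2 : 2 ≤ ℓ := le_max_left _ _
  have hℓw : ℓ ≤ w := max_le hw (Nat.ceil_le.mpr htw)
  have htℓ : t ≤ (ℓ:ℝ) := le_trans (Nat.le_ceil t)
    (by exact_mod_cast le_max_right 2 ⌈t⌉₊)
  have hℓpos : (0:ℝ) < 2*(ℓ:ℝ)+1 := by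
    have : (2:ℝ) ≤ (ℓ:ℝ) := by exact_mod_cast hℓ2
    linarith
  have hℓpos2 : (0:ℝ) < 2*(ℓ:ℝ)+2 := by linarith
  refine Set.mem_iUnion.mpr ⟨ℓ, Set.mem_iUnion.mpr ⟨Finset.mem_Icc.mpr ⟨hℓ2, hℓw⟩, ?_, ?_⟩⟩
  · -- lower bound
    rw [div_le_iff₀ hℓpos]
    rcases le_or_gt ⌈t⌉₊ 2 with h | h
    · have hℓeq : ℓ = 2 := max_eq_left h
      rw [hℓeq]; push_cast; linarith
    · have hℓeq : ℓ = ⌈t⌉₊ := max_eq_right h.le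
      have hlt : ((⌈t⌉₊:ℕ):ℝ) < t + 1 := Nat.ceil_lt_add_one ht0
      have : (ℓ:ℝ) ≤ t + 1 := by rw [hℓeq]; exact hlt.le
      nlinarith
  · -- upper bound
    rw [le_div_iff₀ hℓpos2]
    nlinarith
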